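/- arXiv:2311.03540 — 2 statements merged into one kernel-verified Lean document; each statement's English description precedes it below -/
import Mathlib

section
/- Gaussian-type integral bound used in the Carleman weight computation (inequality (okorok) of the paper, in closed form): for every real A > 0, ∫₀^∞ e^{−x²} · exp( A·(e^{−x²} − 1) ) dx ≤ √π / (2√A). In particular, for every M > 0 the same bound holds for ∫₀^M e^{−x²} exp( A(e^{−x²} − 1) ) dx. -/
open Real Set MeasureTheory

/-!
Substituting `t = √(1 - e^{-x²})` turns `exp (A (e^{-x²} - 1))` into `e^{-A t²}`, and
`dt = x e^{-x²} / t dx ≥ e^{-x²} dx` because `t ≤ x`. Hence the integral over any subset of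
`(0, ∞)` is at most the half-line Gaussian integral `∫₀^∞ e^{-A t²} dt = √π / (2√A)`.
-/

noncomputable def sqrtOneSubExpNegSq (x : ℝ) : ℝ := √(1 - exp (-x ^ 2))

lemma one_sub_exp_neg_sq_pos {x : ℝ} (hx : x ≠ 0) : 0 < 1 - exp (-x ^ 2) := by
  simpa using exp_lt_one_iff.mpr (neg_lt_zero.mpr (by positivity : 0 < x ^ 2))

lemma sqrtOneSubExpNegSq_pos {x : ℝ} (hx : x ≠ 0) : 0 < sqrtOneSubExpNegSq x :=
  sqrt_pos.mpr (one_sub_exp_neg_sq_pos hx)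

lemma sqrtOneSubExpNegSq_le {x : ℝ} (hx : 0 ≤ x) : sqrtOneSubExpNegSq x ≤ x := by
  refine sqrt_le_iff.mpr ⟨hx, ?_⟩
  linarith [add_one_le_exp (-x ^ 2)]

lemma sq_sqrtOneSubExpNegSq (x : ℝ) : sqrtOneSubExpNegSq x ^ 2 = 1 - exp (-x ^ 2) :=
  sq_sqrt <| by simpa using exp_le_one_iff.mpr (neg_nonpos.mpr (sq_nonneg x))

lemma hasDerivAt_sqrtOneSubExpNegSq {x : ℝ} (hx : x ≠ 0) :
    HasDerivAt sqrtOneSubExpNegSq (x * exp (-x ^ 2) / sqrtOneSubExpNegSq x) x := by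
  have h : HasDerivAt (fun x : ℝ => 1 - exp (-x ^ 2)) (2 * x * exp (-x ^ 2)) x :=
    (((hasDerivAt_pow 2 x).fun_neg.exp).const_sub 1).congr_deriv (by push_cast; ring)
  refine (h.sqrt (one_sub_exp_neg_sq_pos hx).ne').congr_deriv ?_
  unfold sqrtOneSubExpNegSq
  field_simp

lemma injOn_sqrtOneSubExpNegSq : InjOn sqrtOneSubExpNegSq (Ici 0) := by
  intro x hx y hy hxy
  have h := congrArg (· ^ 2) hxy
  simp only [sq_sqrtOneSubExpNegSq, sub_right_inj, exp_eq_exp, neg_inj] at h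
  exact (pow_left_inj₀ hx hy two_ne_zero).mp h

lemma exp_neg_sq_mul_exp_le_abs_deriv_mul {A x : ℝ} (hx : 0 < x) :
    exp (-x ^ 2) * exp (A * (exp (-x ^ 2) - 1)) ≤
      |x * exp (-x ^ 2) / sqrtOneSubExpNegSq x| * exp (-A * sqrtOneSubExpNegSq x ^ 2) := by
  have hpos := sqrtOneSubExpNegSq_pos hx.ne'
  have hexp : exp (A * (exp (-x ^ 2) - 1)) = exp (-A * sqrtOneSubExpNegSq x ^ 2) := by
    rw [sq_sqrtOneSubExpNegSq]; ring_nf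
  rw [hexp, abs_of_pos (by positivity)]
  gcongr
  rw [le_div_iff₀ hpos, mul_comm x]
  gcongr
  exact sqrtOneSubExpNegSq_le hx.le

lemma setIntegral_exp_neg_mul_sq_le {A : ℝ} (hA : 0 < A) {s : Set ℝ} (hs : s ⊆ Ioi 0) :
    ∫ t in s, exp (-A * t ^ 2) ≤ √π / (2 * √A) := by
  calc ∫ t in s, exp (-A * t ^ 2) ≤ ∫ t in Ioi 0, exp (-A * t ^ 2) :=
        setIntegral_mono_set (integrable_exp_neg_mul_sq hA).integrableOn
          (.of_forall fun _ => (exp_pos _).le) (.of_forall hs)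
    _ = √π / (2 * √A) := by
        rw [integral_gaussian_Ioi, sqrt_div pi_pos.le, div_div, mul_comm]

lemma setIntegral_exp_neg_sq_mul_exp_le {A : ℝ} (hA : 0 < A) {s : Set ℝ}
    (hs : MeasurableSet s) (hs0 : s ⊆ Ioi 0) :
    ∫ x in s, exp (-x ^ 2) * exp (A * (exp (-x ^ 2) - 1)) ≤ √π / (2 * √A) := by
  have hderiv : ∀ x ∈ s, HasDerivWithinAt sqrtOneSubExpNegSq
      (x * exp (-x ^ 2) / sqrtOneSubExpNegSq x) s x :=
    fun x hx => (hasDerivAt_sqrtOneSubExpNegSq (hs0 hx).ne').hasDerivWithinAt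
  have hinj : InjOn sqrtOneSubExpNegSq s :=
    injOn_sqrtOneSubExpNegSq.mono (hs0.trans Ioi_subset_Ici_self)
  have hint := (integrableOn_image_iff_integrableOn_abs_deriv_smul hs hderiv hinj _).mp
    (integrable_exp_neg_mul_sq hA).integrableOn
  calc ∫ x in s, exp (-x ^ 2) * exp (A * (exp (-x ^ 2) - 1))
      ≤ ∫ x in s, |x * exp (-x ^ 2) / sqrtOneSubExpNegSq x| •
          exp (-A * sqrtOneSubExpNegSq x ^ 2) :=
        integral_mono_of_nonneg (.of_forall fun _ => by positivity) hint <|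
          (ae_restrict_iff' hs).mpr <|
            .of_forall fun x hx => exp_neg_sq_mul_exp_le_abs_deriv_mul (hs0 hx)
    _ = ∫ t in sqrtOneSubExpNegSq '' s, exp (-A * t ^ 2) :=
        (integral_image_eq_integral_abs_deriv_smul hs hderiv hinj (fun t => exp (-A * t ^ 2))).symm
    _ ≤ √π / (2 * √A) := by
        refine setIntegral_exp_neg_mul_sq_le hA ?_
        rintro _ ⟨x, hx, rfl⟩
        exact sqrtOneSubExpNegSq_pos (hs0 hx).ne'

/-- Gaussian-type integral bound used in the Carleman weight computation:
for every `A > 0`,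
`∫₀^∞ e^{−x²} · exp(A·(e^{−x²} − 1)) dx ≤ √π / (2√A)`,
and for every `M > 0` the same bound holds for the integral over `(0, M]`. -/
theorem gaussian_type_integral_bound (A : ℝ) (hA : 0 < A) :
    (∫ x in Set.Ioi (0:ℝ),
        Real.exp (-x ^ 2) * Real.exp (A * (Real.exp (-x ^ 2) - 1))
      ≤ Real.sqrt Real.pi / (2 * Real.sqrt A)) ∧
    ∀ M : ℝ, 0 < M →
      ∫ x in Set.Ioc (0:ℝ) M,
          Real.exp (-x ^ 2) * Real.exp (A * (Real.exp (-x ^ 2) - 1))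
        ≤ Real.sqrt Real.pi / (2 * Real.sqrt A) :=
  ⟨setIntegral_exp_neg_sq_mul_exp_le hA measurableSet_Ioi subset_rfl,
    fun _ _ => setIntegral_exp_neg_sq_mul_exp_le hA measurableSet_Ioc Ioc_subset_Ioi_self⟩
end

section
/- Fubini–Gaussian reduction of a weighted volume integral to a boundary integral (inequality (okorok1) of the paper, with explicit constant): let O ⊂ ℝ^{n−1} be a bounded measurable set, ε, T, N, K > 0, let ψ̃ : O → ℝ be bounded measurable, let ℓ : (0,T) → (0,∞) be measurable, let S ≥ sup_{x∈cl(O×(0,ε))} |ψ(x)| where ψ(x',x_n) = ψ̃(x') − N x_n² + K, and define φ(t,x) = e^{λψ(x)}/ℓ(t) and α(t,x) = (e^{λψ(x)} − e^{2λS})/ℓ(t). Then for every τ > 0 and λ > 0 and every measurable f : (0,T)×O → ℝ, ∫_{(0,T)×O×(0,ε)} τ φ(t,x) |f(t,x')|² e^{2τα(t,x)} dx dt ≤ ( √π / (2√(2N)) ) · λ^{−1/2} · ∫_{(0,T)×O} √(τ φ(t,x',0)) |f(t,x')|² e^{2τα(t,x',0)} dx' dt, whenever the right-hand side is finite. -/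
open Set MeasureTheory

noncomputable section

/-- The slab `O × (0,ε) ⊆ ℝⁿ`, with `x = (x', xₙ)`, `x' = x ∘ Fin.castSucc`,
`xₙ = x (Fin.last m)`. -/
def slab {m : ℕ} (O : Set (Fin m → ℝ)) (ε : ℝ) : Set (Fin (m + 1) → ℝ) :=
  {x | (fun i : Fin m => x i.castSucc) ∈ O ∧ x (Fin.last m) ∈ Set.Ioo 0 ε}

/-- The weight `ψ(x',xₙ) = ψ̃(x') − N xₙ² + K`. -/
def psiWeight {m : ℕ} (ψt : (Fin m → ℝ) → ℝ) (N K : ℝ) (x : Fin (m + 1) → ℝ) : ℝ :=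
  ψt (fun i : Fin m => x i.castSucc) - N * (x (Fin.last m)) ^ 2 + K

/-- `φ(t,x) = e^{λψ(x)}/ℓ(t)`. -/
def carlPhi {m : ℕ} (lam : ℝ) (ψ : (Fin m → ℝ) → ℝ) (ℓ : ℝ → ℝ)
    (p : ℝ × (Fin m → ℝ)) : ℝ :=
  Real.exp (lam * ψ p.2) / ℓ p.1

/-- `α(t,x) = (e^{λψ(x)} − e^{2λS})/ℓ(t)`. -/
def carlAlpha {m : ℕ} (lam S : ℝ) (ψ : (Fin m → ℝ) → ℝ) (ℓ : ℝ → ℝ)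
    (p : ℝ × (Fin m → ℝ)) : ℝ :=
  (Real.exp (lam * ψ p.2) - Real.exp (2 * lam * S)) / ℓ p.1

/-! For fixed `(t, x')` the weight in `xₙ = s` is `φ₀ e^{-λN s²}`, and the exponent is
`2τα₀ + 2τφ₀ (e^{-λN s²} - 1)`, where `φ₀, α₀` are the values on the boundary `s = 0`. The
substitution `v = √(2τφ₀ (1 - e^{-λN s²}))` together with `1 - e^{-x} ≤ x` bounds the integral in
`s` over `(0, ∞)` by a Gaussian integral, which produces the factor `√π / (2 √(2τφ₀λN))` and so
turns the prefactor `τφ₀` into `√(τφ₀)`. Tonelli's inequality `∫_{X×Y} ≤ ∫_X ∫_Y`, valid for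
arbitrary nonnegative functions, integrates this over `x' ∈ O` and `t ∈ (0, T)`. -/

open Real
open scoped ENNReal

lemma setLIntegral_prod_le {α β : Type*} [MeasurableSpace α] [MeasurableSpace β]
    (μ : Measure α) (ν : Measure β) [SFinite μ] [SFinite ν] (s : Set α) (t : Set β)
    (f : α × β → ℝ≥0∞) :
    ∫⁻ z in s ×ˢ t, f z ∂μ.prod ν ≤ ∫⁻ x in s, ∫⁻ y in t, f (x, y) ∂ν ∂μ := by
  rw [← Measure.prod_restrict]
  exact lintegral_prod_le f

lemma integral_le_of_lintegral_ofReal_norm_le {α : Type*} [MeasurableSpace α] {μ : Measure α}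
    {f : α → ℝ} {b : ℝ} (hb : 0 ≤ b) (h : ∫⁻ x, ENNReal.ofReal ‖f x‖ ∂μ ≤ ENNReal.ofReal b) :
    ∫ x, f x ∂μ ≤ b :=
  calc ∫ x, f x ∂μ ≤ ‖∫ x, f x ∂μ‖ := Real.le_norm_self _
    _ ≤ (∫⁻ x, ENNReal.ofReal ‖f x‖ ∂μ).toReal := norm_integral_le_lintegral_norm f
    _ ≤ b := ENNReal.toReal_le_of_le_ofReal hb h

section GaussianBound

variable {A c : ℝ}

lemma mul_one_sub_exp_neg_mul_sq_pos (hA : 0 < A) (hc : 0 < c) {s : ℝ} (hs : 0 < s) :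
    0 < A * (1 - exp (-c * s ^ 2)) := by
  have : exp (-c * s ^ 2) < 1 := exp_lt_one_iff.2 (by nlinarith [mul_pos hc (pow_pos hs 2)])
  nlinarith

lemma hasDerivAt_sqrt_mul_one_sub_exp_neg_mul_sq (hA : 0 < A) (hc : 0 < c) {s : ℝ}
    (hs : 0 < s) :
    HasDerivAt (fun s => √(A * (1 - exp (-c * s ^ 2))))
      (A * c * s * exp (-c * s ^ 2) / √(A * (1 - exp (-c * s ^ 2)))) s := by
  have hr := mul_one_sub_exp_neg_mul_sq_pos hA hc hs
  have hinner : HasDerivAt (fun s => A * (1 - exp (-c * s ^ 2)))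
      (2 * A * c * s * exp (-c * s ^ 2)) s := by
    refine ((((hasDerivAt_pow 2 s).const_mul (-c)).exp.const_sub 1).const_mul A).congr_deriv ?_
    push_cast
    ring
  refine (hinner.sqrt hr.ne').congr_deriv ?_
  field_simp

lemma sqrt_mul_one_sub_exp_neg_mul_sq_le (hA : 0 ≤ A) (hc : 0 ≤ c) {s : ℝ} (hs : 0 ≤ s) :
    √(A * (1 - exp (-c * s ^ 2))) ≤ √(A * c) * s :=
  calc √(A * (1 - exp (-c * s ^ 2))) ≤ √(A * c * s ^ 2) := by
        have : 1 - exp (-c * s ^ 2) ≤ c * s ^ 2 := by linarith [add_one_le_exp (-c * s ^ 2)]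
        exact sqrt_le_sqrt (by nlinarith)
    _ = √(A * c) * s := by rw [sqrt_mul (by positivity), sqrt_sq hs]

lemma strictMonoOn_sqrt_mul_one_sub_exp_neg_mul_sq (hA : 0 < A) (hc : 0 < c) :
    StrictMonoOn (fun s => √(A * (1 - exp (-c * s ^ 2)))) (Ioi 0) := by
  intro a ha b _ hab
  have hsq : a ^ 2 < b ^ 2 := pow_lt_pow_left₀ hab (le_of_lt ha) two_ne_zero
  have : exp (-c * b ^ 2) < exp (-c * a ^ 2) := exp_lt_exp.2 (by nlinarith)
  exact sqrt_lt_sqrt (mul_one_sub_exp_neg_mul_sq_pos hA hc ha).le (by gcongr)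

lemma lintegral_exp_neg_sq_Ioi :
    ∫⁻ v in Ioi 0, ENNReal.ofReal (exp (-v ^ 2)) = ENNReal.ofReal (√π / 2) := by
  rw [← ofReal_integral_eq_lintegral_ofReal]
  · congr 1
    simpa using integral_gaussian_Ioi 1
  · have := (integrable_exp_neg_mul_sq one_pos).integrableOn (s := Ioi 0)
    simp only [neg_mul, one_mul] at this
    exact this
  · exact ae_of_all _ fun v => (exp_pos _).le

/-- With `v = √(A (1 - e^{-c s²}))` one has `e^{-v²} = e^{A (e^{-c s²} - 1)}`, and `v ≤ √(A c) s`
gives `dv/ds ≥ √(A c) e^{-c s²}`; so the integrand is at most `(A c)^{-1/2} e^{-v²} dv/ds`. -/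
lemma lintegral_exp_neg_mul_sq_mul_exp_le (hA : 0 < A) (hc : 0 < c) :
    ∫⁻ s in Ioi 0, ENNReal.ofReal (exp (-c * s ^ 2) * exp (A * (exp (-c * s ^ 2) - 1)))
      ≤ ENNReal.ofReal (√π / (2 * √(A * c))) := by
  set v : ℝ → ℝ := fun s => √(A * (1 - exp (-c * s ^ 2))) with hv
  set v' : ℝ → ℝ := fun s => A * c * s * exp (-c * s ^ 2) / v s with hv'
  have hAc : 0 < √(A * c) := sqrt_pos.2 (mul_pos hA hc)
  have hdom : ∀ s ∈ Ioi (0 : ℝ), exp (-c * s ^ 2) * exp (A * (exp (-c * s ^ 2) - 1))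
      ≤ (√(A * c))⁻¹ * (|v' s| * exp (-v s ^ 2)) := by
    intro s (hs : 0 < s)
    have hvs : 0 < v s := sqrt_pos.2 (mul_one_sub_exp_neg_mul_sq_pos hA hc hs)
    have hexp : exp (-v s ^ 2) = exp (A * (exp (-c * s ^ 2) - 1)) := by
      rw [hv, sq_sqrt (mul_one_sub_exp_neg_mul_sq_pos hA hc hs).le]
      ring_nf
    have hratio : 1 ≤ A * c * s / (√(A * c) * v s) := by
      rw [one_le_div (by positivity)]
      calc √(A * c) * v s ≤ √(A * c) * (√(A * c) * s) :=
            by gcongr; exact sqrt_mul_one_sub_exp_neg_mul_sq_le hA.le hc.le hs.le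
        _ = A * c * s := by rw [← mul_assoc, mul_self_sqrt (by positivity)]
    rw [hexp, abs_of_pos (by positivity)]
    calc exp (-c * s ^ 2) * exp (A * (exp (-c * s ^ 2) - 1))
        ≤ A * c * s / (√(A * c) * v s) * exp (-c * s ^ 2) *
            exp (A * (exp (-c * s ^ 2) - 1)) := by
          gcongr
          exact le_mul_of_one_le_left (exp_pos _).le hratio
      _ = _ := by rw [hv']; field_simp
  have hderiv : ∀ s ∈ Ioi (0 : ℝ), HasDerivWithinAt v (v' s) (Ioi 0) s := fun s hs =>
    (hasDerivAt_sqrt_mul_one_sub_exp_neg_mul_sq hA hc hs).hasDerivWithinAt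
  have himage : v '' Ioi 0 ⊆ Ioi 0 := by
    rintro - ⟨s, hs, rfl⟩
    exact sqrt_pos.2 (mul_one_sub_exp_neg_mul_sq_pos hA hc hs)
  calc ∫⁻ s in Ioi 0, ENNReal.ofReal (exp (-c * s ^ 2) * exp (A * (exp (-c * s ^ 2) - 1)))
      ≤ ∫⁻ s in Ioi 0, ENNReal.ofReal (√(A * c))⁻¹ *
          (ENNReal.ofReal |v' s| * ENNReal.ofReal (exp (-v s ^ 2))) := by
        refine setLIntegral_mono' measurableSet_Ioi fun s hs => ?_
        rw [← ENNReal.ofReal_mul (abs_nonneg _), ← ENNReal.ofReal_mul (by positivity)]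
        exact ENNReal.ofReal_le_ofReal (hdom s hs)
    _ = ENNReal.ofReal (√(A * c))⁻¹ * ∫⁻ w in v '' Ioi 0, ENNReal.ofReal (exp (-w ^ 2)) := by
        rw [lintegral_const_mul' _ _ ENNReal.ofReal_ne_top,
          lintegral_image_eq_lintegral_abs_deriv_mul measurableSet_Ioi hderiv
            (strictMonoOn_sqrt_mul_one_sub_exp_neg_mul_sq hA hc).injOn]
    _ ≤ ENNReal.ofReal (√(A * c))⁻¹ * ∫⁻ w in Ioi 0, ENNReal.ofReal (exp (-w ^ 2)) := by
        gcongr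
    _ = ENNReal.ofReal (√π / (2 * √(A * c))) := by
        rw [lintegral_exp_neg_sq_Ioi, ← ENNReal.ofReal_mul (by positivity)]
        congr 1
        field_simp

end GaussianBound

def snocMeasurableEquiv (α : Type*) [MeasurableSpace α] (m : ℕ) :
    (Fin m → α) × α ≃ᵐ (Fin (m + 1) → α) :=
  MeasurableEquiv.prodComm.trans (MeasurableEquiv.piFinSuccAbove (fun _ => α) (Fin.last m)).symm

lemma snocMeasurableEquiv_apply {α : Type*} [MeasurableSpace α] {m : ℕ} (x' : Fin m → α)
    (s : α) : snocMeasurableEquiv α m (x', s) = Fin.snoc x' s := by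
  simp [snocMeasurableEquiv, Fin.snocEquiv, MeasurableEquiv.prodComm]

lemma volume_preserving_snocMeasurableEquiv (α : Type*) [MeasureSpace α]
    [SigmaFinite (volume : Measure α)] (m : ℕ) :
    MeasurePreserving (snocMeasurableEquiv α m) :=
  Measure.measurePreserving_swap.trans
    (volume_preserving_piFinSuccAbove (fun _ => α) (Fin.last m)).symm

lemma image_snocMeasurableEquiv_prod_Ioo {m : ℕ} (O : Set (Fin m → ℝ)) (ε : ℝ) :
    snocMeasurableEquiv ℝ m '' (O ×ˢ Ioo 0 ε) = slab O ε := by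
  ext x
  constructor
  · rintro ⟨⟨x', s⟩, ⟨hx', hs⟩, rfl⟩
    simpa [snocMeasurableEquiv_apply, slab] using ⟨hx', hs⟩
  · rintro ⟨hx', hs⟩
    exact ⟨(Fin.init x, x (Fin.last m)), ⟨hx', hs⟩, by
      rw [snocMeasurableEquiv_apply, Fin.snoc_init_self]⟩

lemma lintegral_slab_le {m : ℕ} (O : Set (Fin m → ℝ)) (ε : ℝ)
    (G : (Fin (m + 1) → ℝ) → ℝ≥0∞) :
    ∫⁻ x in slab O ε, G x ≤ ∫⁻ x' in O, ∫⁻ s in Ioo 0 ε, G (Fin.snoc x' s) := by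
  have hmp := volume_preserving_snocMeasurableEquiv ℝ m
  rw [← image_snocMeasurableEquiv_prod_Ioo,
    ← hmp.setLIntegral_comp_emb (MeasurableEquiv.measurableEmbedding _), Measure.volume_eq_prod]
  simpa only [snocMeasurableEquiv_apply] using setLIntegral_prod_le volume volume O (Ioo 0 ε)
    (fun y => G (snocMeasurableEquiv ℝ m y))

section Weights

variable {m : ℕ} (ψt : (Fin m → ℝ) → ℝ) (N K lam S : ℝ) (ℓ : ℝ → ℝ) (t : ℝ)
  (x' : Fin m → ℝ)

lemma psiWeight_snoc (s : ℝ) :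
    psiWeight ψt N K (Fin.snoc x' s) = psiWeight ψt N K (Fin.snoc x' 0) - N * s ^ 2 := by
  simp only [psiWeight, Fin.snoc_castSucc, Fin.snoc_last]
  ring

lemma carlPhi_snoc (s : ℝ) :
    carlPhi lam (psiWeight ψt N K) ℓ (t, Fin.snoc x' s)
      = carlPhi lam (psiWeight ψt N K) ℓ (t, Fin.snoc x' 0) * exp (-(lam * N) * s ^ 2) := by
  simp only [carlPhi, psiWeight_snoc ψt N K x' s]
  rw [show lam * (psiWeight ψt N K (Fin.snoc x' 0) - N * s ^ 2)
      = lam * psiWeight ψt N K (Fin.snoc x' 0) + -(lam * N) * s ^ 2 by ring, exp_add]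
  ring

lemma carlAlpha_snoc (s : ℝ) :
    carlAlpha lam S (psiWeight ψt N K) ℓ (t, Fin.snoc x' s)
      = carlAlpha lam S (psiWeight ψt N K) ℓ (t, Fin.snoc x' 0)
        + carlPhi lam (psiWeight ψt N K) ℓ (t, Fin.snoc x' 0) * (exp (-(lam * N) * s ^ 2) - 1) := by
  have hφ := carlPhi_snoc ψt N K lam ℓ t x' s
  simp only [carlAlpha, carlPhi] at hφ ⊢
  rw [sub_div, hφ]
  ring

end Weights

lemma carlPhi_pos {m : ℕ} (lam : ℝ) (ψ : (Fin m → ℝ) → ℝ) {ℓ : ℝ → ℝ}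
    {p : ℝ × (Fin m → ℝ)} (hℓ : 0 < ℓ p.1) : 0 < carlPhi lam ψ ℓ p :=
  div_pos (exp_pos _) hℓ

lemma lintegral_weight_snoc_le {m : ℕ} (ψt : (Fin m → ℝ) → ℝ) {N : ℝ} (K : ℝ) {lam : ℝ}
    (S : ℝ) {ℓ : ℝ → ℝ} {t τ : ℝ} (x' : Fin m → ℝ) (a : ℝ) (hN : 0 < N) (hlam : 0 < lam)
    (hτ : 0 < τ) (hℓ : 0 < ℓ t) :
    ∫⁻ s in Ioi 0, ENNReal.ofReal (τ * carlPhi lam (psiWeight ψt N K) ℓ (t, Fin.snoc x' s) *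
        a ^ 2 * exp (2 * τ * carlAlpha lam S (psiWeight ψt N K) ℓ (t, Fin.snoc x' s)))
      ≤ ENNReal.ofReal (√π / (2 * √(2 * N)) * (√lam)⁻¹ *
        (√(τ * carlPhi lam (psiWeight ψt N K) ℓ (t, Fin.snoc x' 0)) * a ^ 2 *
          exp (2 * τ * carlAlpha lam S (psiWeight ψt N K) ℓ (t, Fin.snoc x' 0)))) := by
  have hsplit : ∀ s : ℝ,
      τ * carlPhi lam (psiWeight ψt N K) ℓ (t, Fin.snoc x' s) * a ^ 2 *
          exp (2 * τ * carlAlpha lam S (psiWeight ψt N K) ℓ (t, Fin.snoc x' s))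
        = τ * carlPhi lam (psiWeight ψt N K) ℓ (t, Fin.snoc x' 0) * a ^ 2 *
            exp (2 * τ * carlAlpha lam S (psiWeight ψt N K) ℓ (t, Fin.snoc x' 0)) *
          (exp (-(lam * N) * s ^ 2) *
            exp (2 * τ * carlPhi lam (psiWeight ψt N K) ℓ (t, Fin.snoc x' 0) *
              (exp (-(lam * N) * s ^ 2) - 1))) := by
    intro s
    rw [carlPhi_snoc, carlAlpha_snoc, mul_add, exp_add, ← mul_assoc (2 * τ)]
    ring
  set φ₀ := carlPhi lam (psiWeight ψt N K) ℓ (t, Fin.snoc x' 0)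
  set α₀ := carlAlpha lam S (psiWeight ψt N K) ℓ (t, Fin.snoc x' 0)
  have hφ₀ : 0 < φ₀ := carlPhi_pos lam _ hℓ
  have hsqrt : √(2 * τ * φ₀ * (lam * N)) = √(2 * N) * √lam * √(τ * φ₀) := by
    rw [← sqrt_mul (by positivity), ← sqrt_mul (by positivity)]
    ring_nf
  calc _ = ENNReal.ofReal (τ * φ₀ * a ^ 2 * exp (2 * τ * α₀)) * ∫⁻ s in Ioi 0,
        ENNReal.ofReal (exp (-(lam * N) * s ^ 2) *
          exp (2 * τ * φ₀ * (exp (-(lam * N) * s ^ 2) - 1))) := by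
        have hprefactor : 0 ≤ τ * φ₀ * a ^ 2 * exp (2 * τ * α₀) := by positivity
        simp_rw [hsplit, ENNReal.ofReal_mul hprefactor]
        exact lintegral_const_mul' _ _ ENNReal.ofReal_ne_top
    _ ≤ ENNReal.ofReal (τ * φ₀ * a ^ 2 * exp (2 * τ * α₀)) *
        ENNReal.ofReal (√π / (2 * √(2 * τ * φ₀ * (lam * N)))) := by
        gcongr
        exact lintegral_exp_neg_mul_sq_mul_exp_le (by positivity) (by positivity)
    _ = _ := by
        rw [← ENNReal.ofReal_mul (by positivity), hsqrt]
        congr 1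
        have : 0 < √(τ * φ₀) := sqrt_pos.2 (by positivity)
        field_simp
        rw [sq_sqrt (by positivity)]
        ring

lemma lintegral_slab_weight_le {m : ℕ} (O : Set (Fin m → ℝ)) (ε : ℝ) (ψt : (Fin m → ℝ) → ℝ)
    {N : ℝ} (K : ℝ) {lam : ℝ} (S : ℝ) {ℓ : ℝ → ℝ} {t τ : ℝ} (F : (Fin m → ℝ) → ℝ)
    (hN : 0 < N) (hlam : 0 < lam) (hτ : 0 < τ) (hℓ : 0 < ℓ t) :
    ∫⁻ x in slab O ε, ENNReal.ofReal ‖τ * carlPhi lam (psiWeight ψt N K) ℓ (t, x) *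
        F (fun i : Fin m => x i.castSucc) ^ 2 *
        exp (2 * τ * carlAlpha lam S (psiWeight ψt N K) ℓ (t, x))‖
      ≤ ENNReal.ofReal (√π / (2 * √(2 * N)) * (√lam)⁻¹) *
        ∫⁻ x' in O, ENNReal.ofReal (√(τ * carlPhi lam (psiWeight ψt N K) ℓ (t, Fin.snoc x' 0)) *
          F x' ^ 2 * exp (2 * τ * carlAlpha lam S (psiWeight ψt N K) ℓ (t, Fin.snoc x' 0))) := by
  rw [← lintegral_const_mul' _ _ ENNReal.ofReal_ne_top]
  refine (lintegral_slab_le O ε _).trans (lintegral_mono fun x' => ?_)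
  rw [← ENNReal.ofReal_mul (by positivity)]
  refine (lintegral_mono_set Ioo_subset_Ioi_self).trans (le_of_eq_of_le ?_
    (lintegral_weight_snoc_le ψt K S x' (F x') hN hlam hτ hℓ))
  refine lintegral_congr fun s => ?_
  have hφ := carlPhi_pos lam (psiWeight ψt N K) (p := (t, Fin.snoc x' s)) hℓ
  rw [Real.norm_of_nonneg (by positivity)]
  simp only [Fin.snoc_castSucc]

theorem fubini_gaussian_reduction_general {m : ℕ}
    (O : Set (Fin m → ℝ))
    (ε T N K : ℝ) (hN : 0 < N)
    (ψt : (Fin m → ℝ) → ℝ)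
    (ℓ : ℝ → ℝ) (hℓpos : ∀ t ∈ Set.Ioo 0 T, 0 < ℓ t)
    (S : ℝ)
    (τ lam : ℝ) (hτ : 0 < τ) (hlam : 0 < lam)
    (f : ℝ × (Fin m → ℝ) → ℝ)
    (hint : IntegrableOn
      (fun q : ℝ × (Fin m → ℝ) =>
        Real.sqrt (τ * carlPhi lam (psiWeight ψt N K) ℓ (q.1, Fin.snoc q.2 0)) *
          (f q) ^ 2 *
          Real.exp (2 * τ * carlAlpha lam S (psiWeight ψt N K) ℓ (q.1, Fin.snoc q.2 0)))
      (Set.Ioo 0 T ×ˢ O)) :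
    (∫ p in Set.Ioo 0 T ×ˢ slab O ε,
        τ * carlPhi lam (psiWeight ψt N K) ℓ p *
          (f (p.1, fun i : Fin m => p.2 i.castSucc)) ^ 2 *
          Real.exp (2 * τ * carlAlpha lam S (psiWeight ψt N K) ℓ p))
      ≤ (Real.sqrt Real.pi / (2 * Real.sqrt (2 * N))) * (Real.sqrt lam)⁻¹ *
        ∫ q in Set.Ioo 0 T ×ˢ O,
          Real.sqrt (τ * carlPhi lam (psiWeight ψt N K) ℓ (q.1, Fin.snoc q.2 0)) *
            (f q) ^ 2 *
            Real.exp (2 * τ * carlAlpha lam S (psiWeight ψt N K) ℓ (q.1, Fin.snoc q.2 0)) := by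
  set C := √π / (2 * √(2 * N)) * (√lam)⁻¹
  set h := fun q : ℝ × (Fin m → ℝ) =>
    √(τ * carlPhi lam (psiWeight ψt N K) ℓ (q.1, Fin.snoc q.2 0)) * f q ^ 2 *
      exp (2 * τ * carlAlpha lam S (psiWeight ψt N K) ℓ (q.1, Fin.snoc q.2 0))
  have hh : 0 ≤ h := fun q => by positivity
  refine integral_le_of_lintegral_ofReal_norm_le
    (mul_nonneg (by positivity) (integral_nonneg hh)) ?_
  rw [Measure.volume_eq_prod]
  calc _ ≤ ∫⁻ t in Ioo 0 T, ∫⁻ x in slab O ε, _ := setLIntegral_prod_le _ _ _ _ _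
    _ ≤ ∫⁻ t in Ioo 0 T, ENNReal.ofReal C * ∫⁻ x' in O, ENNReal.ofReal (h (t, x')) :=
        setLIntegral_mono' measurableSet_Ioo fun t ht =>
          lintegral_slab_weight_le O ε ψt K S (fun x' => f (t, x')) hN hlam hτ (hℓpos t ht)
    _ = ENNReal.ofReal C * ENNReal.ofReal (∫ q in Ioo 0 T ×ˢ O, h q) := by
        rw [lintegral_const_mul' _ _ ENNReal.ofReal_ne_top,
          ofReal_integral_eq_lintegral_ofReal hint (ae_of_all _ hh), Measure.volume_eq_prod,
          setLIntegral_prod _ hint.aemeasurable.ennreal_ofReal]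
    _ = ENNReal.ofReal (C * ∫ q in Ioo 0 T ×ˢ O, h q) := (ENNReal.ofReal_mul (by positivity)).symm

/-- Fubini–Gaussian reduction of a weighted volume integral to a boundary
integral (inequality (okorok1) of the paper, with explicit constant). -/
theorem fubini_gaussian_reduction {m : ℕ}
    (O : Set (Fin m → ℝ)) (hObd : Bornology.IsBounded O) (hOmeas : MeasurableSet O)
    (ε T N K : ℝ) (hε : 0 < ε) (hT : 0 < T) (hN : 0 < N) (hK : 0 < K)
    (ψt : (Fin m → ℝ) → ℝ) (hψtm : Measurable ψt)
    (hψtbd : ∃ C : ℝ, ∀ x' ∈ O, |ψt x'| ≤ C)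
    (ℓ : ℝ → ℝ) (hℓm : Measurable ℓ) (hℓpos : ∀ t ∈ Set.Ioo 0 T, 0 < ℓ t)
    (S : ℝ) (hS : ∀ x ∈ closure (slab O ε), |psiWeight ψt N K x| ≤ S)
    (τ lam : ℝ) (hτ : 0 < τ) (hlam : 0 < lam)
    (f : ℝ × (Fin m → ℝ) → ℝ) (hf : Measurable f)
    (hint : IntegrableOn
      (fun q : ℝ × (Fin m → ℝ) =>
        Real.sqrt (τ * carlPhi lam (psiWeight ψt N K) ℓ (q.1, Fin.snoc q.2 0)) *
          (f q) ^ 2 *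
          Real.exp (2 * τ * carlAlpha lam S (psiWeight ψt N K) ℓ (q.1, Fin.snoc q.2 0)))
      (Set.Ioo 0 T ×ˢ O)) :
    (∫ p in Set.Ioo 0 T ×ˢ slab O ε,
        τ * carlPhi lam (psiWeight ψt N K) ℓ p *
          (f (p.1, fun i : Fin m => p.2 i.castSucc)) ^ 2 *
          Real.exp (2 * τ * carlAlpha lam S (psiWeight ψt N K) ℓ p))
      ≤ (Real.sqrt Real.pi / (2 * Real.sqrt (2 * N))) * (Real.sqrt lam)⁻¹ *
        ∫ q in Set.Ioo 0 T ×ˢ O,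
          Real.sqrt (τ * carlPhi lam (psiWeight ψt N K) ℓ (q.1, Fin.snoc q.2 0)) *
            (f q) ^ 2 *
            Real.exp (2 * τ * carlAlpha lam S (psiWeight ψt N K) ℓ (q.1, Fin.snoc q.2 0)) :=
  fubini_gaussian_reduction_general O ε T N K hN ψt ℓ hℓpos S τ lam hτ hlam f hint
end
end
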